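/- arXiv:2604.18044 — 3 statements merged into one kernel-verified Lean document; each statement's English description precedes it below -/
import Mathlib

section
/- The benchmark public-disclosure coefficient on the previous group's average signal, c(K, ν_s, ν_ε) = (Kν_s/(ν_ε+(K+1)ν_s))·(1 + ν_s/(ν_ε+(K+1)ν_s)), is strictly increasing in the group size K, strictly increasing in ν_s, and strictly decreasing in ν_ε. -/
/-!
Writing `t = νε / νs`, the weight `νs / (νε + (K + 1) νs)` equals `(K + 1 + t)⁻¹`, so the
coefficient is `K x (1 + x)` with `x = (K + 1 + t)⁻¹` and depends on the precisions only
through `t`. It is strictly decreasing in `t`, which gives both precision claims. In `K`, the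
gain in the factor `K` outweighs the loss in `x` because `t ≥ 0`.
-/

open Set

/-- The coefficient as a function of `K` and the precision ratio `t = νε / νs`. -/
noncomputable def benchmarkCoeff (K t : ℝ) : ℝ :=
  K * (K + 1 + t)⁻¹ * (1 + (K + 1 + t)⁻¹)

lemma benchmarkCoeff_div (K νs νε : ℝ) (hs : νs ≠ 0) :
    K * νs / (νε + (K + 1) * νs) * (1 + νs / (νε + (K + 1) * νs))
      = benchmarkCoeff K (νε / νs) := by
  have hweight : νs / (νε + (K + 1) * νs) = (K + 1 + νε / νs)⁻¹ := by
    rw [← inv_div]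
    congr 1
    field_simp
    ring
  rw [mul_div_assoc, hweight, benchmarkCoeff]

lemma benchmarkCoeff_strictAntiOn {K : ℝ} (hK : 0 < K) :
    StrictAntiOn (benchmarkCoeff K) (Ici 0) := by
  intro t (ht : 0 ≤ t) t' (ht' : 0 ≤ t') htt'
  have hx : (K + 1 + t')⁻¹ < (K + 1 + t)⁻¹ := by gcongr
  have hx' : 0 < (K + 1 + t')⁻¹ := by positivity
  unfold benchmarkCoeff
  gcongr

lemma benchmarkCoeff_lt_succ {K t : ℝ} (hK : 0 ≤ K) (ht : 0 ≤ t) :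
    benchmarkCoeff K t < benchmarkCoeff (K + 1) t := by
  have hm : 0 < K + 1 + t := by linarith
  have hsucc : K + 1 + 1 + t = (K + 1 + t) + 1 := by ring
  unfold benchmarkCoeff
  rw [hsucc]
  set m := K + 1 + t
  have hform (k n : ℝ) (hn : n ≠ 0) : k * n⁻¹ * (1 + n⁻¹) = k * (n + 1) / n ^ 2 := by
    field_simp
  rw [hform K m hm.ne', hform (K + 1) (m + 1) (by positivity),
    div_lt_div_iff₀ (by positivity) (by positivity)]
  -- with `K = m - 1 - t` the gap is `t m² + 3 t m + 2 m + 1 + t`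
  nlinarith [mul_nonneg ht (sq_nonneg m), mul_nonneg ht hm.le]

/-- The benchmark public-disclosure coefficient
`c(K,νs,νε) = (Kνs/(νε+(K+1)νs))·(1+νs/(νε+(K+1)νs))` on the previous group's average
signal is strictly increasing in `K`, strictly increasing in `νs`, and strictly
decreasing in `νε`. -/
theorem benchmark_coefficient_monotone
    (c : ℕ → ℝ → ℝ → ℝ)
    (hc : ∀ (K : ℕ) (νs νε : ℝ),
      c K νs νε = ((K : ℝ) * νs / (νε + ((K : ℝ) + 1) * νs))
        * (1 + νs / (νε + ((K : ℝ) + 1) * νs))) :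
    (∀ (K : ℕ) (νs νε : ℝ), 1 ≤ K → 0 < νs → 0 < νε →
        c K νs νε < c (K + 1) νs νε)
      ∧ (∀ (K : ℕ) (νs νs' νε : ℝ), 1 ≤ K → 0 < νs → νs < νs' → 0 < νε →
        c K νs νε < c K νs' νε)
      ∧ (∀ (K : ℕ) (νs νε νε' : ℝ), 1 ≤ K → 0 < νs → 0 < νε → νε < νε' →
        c K νs νε' < c K νs νε) := by
  have hc' (K : ℕ) (νs νε : ℝ) (hs : 0 < νs) : c K νs νε = benchmarkCoeff K (νε / νs) := by
    rw [hc, benchmarkCoeff_div _ _ _ hs.ne']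
  refine ⟨fun K νs νε _ hs he => ?_, fun K νs νs' νε hK hs hss' he => ?_,
    fun K νs νε νε' hK hs he he' => ?_⟩
  · rw [hc' _ _ _ hs, hc' _ _ _ hs, Nat.cast_succ]
    exact benchmarkCoeff_lt_succ K.cast_nonneg (div_pos he hs).le
  · have hKpos : (0 : ℝ) < K := by exact_mod_cast hK
    rw [hc' _ _ _ hs, hc' _ _ _ (hs.trans hss')]
    exact benchmarkCoeff_strictAntiOn hKpos (div_pos he (hs.trans hss')).le (div_pos he hs).le
      (div_lt_div_of_pos_left he hs hss')
  · have hKpos : (0 : ℝ) < K := by exact_mod_cast hK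
    rw [hc' _ _ _ hs, hc' _ _ _ hs]
    exact benchmarkCoeff_strictAntiOn hKpos (div_pos he hs).le (div_pos (he.trans he') hs).le
      (div_lt_div_of_pos_right he' hs)
end

section
/- The coefficient on the publicly disclosed average elicited perceived norm N̂_K, namely C_N(K,ν_s,ν_ε) = (Kν_s/(ν_ε+(K+1)ν_s))·(1+ν_s/(ν_ε+(K+1)ν_s))·((ν_s+ν_ε)²/ν_s²), is strictly increasing in K, strictly decreasing in ν_s, and strictly increasing in ν_ε. -/
/-!
With `a = 1 + νε / νs = (νs + νε) / νs`, the coefficient is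
`C_N = K · (a / (a + K))² · (a + K + 1)`. For fixed `K` each factor is positive and increasing
in `a`, and `a` increases in `νε` and decreases in `νs`; this gives the two reversed comparative
statics. Monotonicity in `K` is a polynomial inequality after clearing denominators, valid as
soon as `a ≥ 1`.
-/

open Set

noncomputable def cnProfile (K a : ℝ) : ℝ := K * a ^ 2 * (a + K + 1) / (a + K) ^ 2

theorem CN_formula_eq_cnProfile (K : ℝ) {νs : ℝ} (hs : νs ≠ 0) (νε : ℝ) :
    K * νs * (νε + (K + 2) * νs) * (νs + νε) ^ 2 / ((νε + (K + 1) * νs) ^ 2 * νs ^ 2)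
      = cnProfile K (1 + νε / νs) := by
  rcases eq_or_ne (νε + (K + 1) * νs) 0 with h | h
  · -- both denominators vanish, so both sides are the junk value `x / 0 = 0`
    have : 1 + νε / νs + K = 0 := by
      field_simp; linarith
    simp [cnProfile, h, this]
  unfold cnProfile
  field_simp
  ring

theorem cnProfile_eq_mul_sq (K a : ℝ) :
    cnProfile K a = K * (a / (a + K)) ^ 2 * (a + K + 1) := by
  rw [cnProfile, div_pow]; ring

theorem strictMonoOn_cnProfile {K : ℝ} (hK : 0 < K) : StrictMonoOn (cnProfile K) (Ioi 0) := by
  intro a (ha : 0 < a) b (hb : 0 < b) hab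
  have hfrac : a / (a + K) < b / (b + K) := by
    rw [div_lt_div_iff₀ (by positivity) (by positivity)]
    nlinarith
  simp only [cnProfile_eq_mul_sq]
  gcongr

theorem cnProfile_lt_cnProfile_add_one {K a : ℝ} (hK : 0 ≤ K) (ha : 1 ≤ a) :
    cnProfile K a < cnProfile (K + 1) a := by
  have ha0 : 0 < a := by linarith
  have hcube : K ^ 2 + K < a * (a + K) ^ 2 := calc
    K ^ 2 + K < (1 + K) ^ 2 := by nlinarith
    _ ≤ (a + K) ^ 2 := by gcongr
    _ ≤ a * (a + K) ^ 2 := le_mul_of_one_le_left (by positivity) ha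
  have cross : (K + 1) * a ^ 2 * (a + (K + 1) + 1) * (a + K) ^ 2
      - K * a ^ 2 * (a + K + 1) * (a + (K + 1)) ^ 2
      = a ^ 2 * (a * (a + K) ^ 2 - (K ^ 2 + K) + 2 * a ^ 2 + a * K) := by ring
  unfold cnProfile
  rw [div_lt_div_iff₀ (by positivity) (by positivity), ← sub_pos, cross]
  have : 0 < a * (a + K) ^ 2 - (K ^ 2 + K) := sub_pos.2 hcube
  positivity

/-- The coefficient on the publicly disclosed average elicited perceived norm `N̂_K`,
`C_N(K,νs,νε) = Kνs(νε+(K+2)νs)(νs+νε)² / ((νε+(K+1)νs)²νs²)`, is strictly increasing in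
`K`, strictly decreasing in `νs`, and strictly increasing in `νε`. -/
theorem CN_coefficient_monotone
    (CN : ℕ → ℝ → ℝ → ℝ)
    (hCN : ∀ (K : ℕ) (νs νε : ℝ),
      CN K νs νε = (K : ℝ) * νs * (νε + ((K : ℝ) + 2) * νs) * (νs + νε) ^ 2
        / ((νε + ((K : ℝ) + 1) * νs) ^ 2 * νs ^ 2)) :
    (∀ (K : ℕ) (νs νε : ℝ), 1 ≤ K → 0 < νs → 0 < νε →
        CN K νs νε < CN (K + 1) νs νε)
      ∧ (∀ (K : ℕ) (νs νs' νε : ℝ), 1 ≤ K → 0 < νs → νs < νs' → 0 < νε →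
        CN K νs' νε < CN K νs νε)
      ∧ (∀ (K : ℕ) (νs νε νε' : ℝ), 1 ≤ K → 0 < νs → 0 < νε → νε < νε' →
        CN K νs νε < CN K νs νε') := by
  have hCN' : ∀ (K : ℕ) {νs : ℝ} (νε : ℝ), 0 < νs → CN K νs νε = cnProfile K (1 + νε / νs) :=
    fun K νs νε hs => (hCN K νs νε).trans (CN_formula_eq_cnProfile K hs.ne' νε)
  refine ⟨fun K νs νε _ hs hε => ?_, fun K νs νs' νε hK hs hss' hε => ?_,
    fun K νs νε νε' hK hs hε hεε' => ?_⟩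
  · rw [hCN' K νε hs, hCN' (K + 1) νε hs, Nat.cast_succ]
    exact cnProfile_lt_cnProfile_add_one K.cast_nonneg (by linarith [div_pos hε hs])
  · have hK : (0 : ℝ) < K := by exact_mod_cast hK
    have hs' : 0 < νs' := hs.trans hss'
    rw [hCN' K νε hs, hCN' K νε hs']
    exact strictMonoOn_cnProfile hK (by positivity : (0 : ℝ) < 1 + νε / νs')
      (by positivity : (0 : ℝ) < 1 + νε / νs) (by gcongr)
  · have hK : (0 : ℝ) < K := by exact_mod_cast hK
    have hε' : 0 < νε' := hε.trans hεε'
    rw [hCN' K νε hs, hCN' K νε' hs]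
    exact strictMonoOn_cnProfile hK (by positivity : (0 : ℝ) < 1 + νε / νs)
      (by positivity : (0 : ℝ) < 1 + νε' / νs) (by gcongr)
end

section
/- The coefficient on the publicly disclosed average personal value r̄_K, namely C_r(K,ν_s,ν_ε) = K(ν_s+ν_ε)(ν_ε+(K+2)ν_s)/(ν_ε+(K+1)ν_s)², is strictly increasing in K, strictly decreasing in ν_s, and strictly increasing in ν_ε. -/
/-!
Put `D = νε + (K + 1) νs` and `t = νs / D`. Then `νs + νε = D - K νs` and
`νε + (K + 2) νs = D + νs`, so `C_r = K (1 + t) (1 - K t)`, which for `K ≥ 1` decreases in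
`t ≥ 0`; as `t` increases in `νs` and decreases in `νε`, this gives the claims in `νs` and `νε`.
For `K` both the factor `K` and `t` move, so write instead, with `ρ = νε / νs`,
`C_r = (1 + ρ) (1 - ρ t - (1 + ρ) t²)`: now `K` enters only through `t`, which decreases in `K`.
-/

open Set

noncomputable section

def crCoeff (K νs νε : ℝ) : ℝ :=
  K * (νs + νε) * (νε + (K + 2) * νs) / (νε + (K + 1) * νs) ^ 2

def crWeight (K νs νε : ℝ) : ℝ :=
  νs / (νε + (K + 1) * νs)

end

lemma strictAntiOn_mul_one_add_mul_one_sub_mul {K : ℝ} (hK : 1 ≤ K) :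
    StrictAntiOn (fun t => K * (1 + t) * (1 - K * t)) (Ici 0) := by
  intro t₁ ht₁ t₂ ht₂ ht
  simp only [mem_Ici] at ht₁ ht₂
  have hsq : t₁ ^ 2 < t₂ ^ 2 := by gcongr
  nlinarith [mul_nonneg (by linarith : 0 ≤ K - 1) (by linarith : 0 ≤ t₂ - t₁),
    mul_lt_mul_of_pos_left hsq (by linarith : 0 < K)]

lemma strictAntiOn_one_add_mul_one_sub_sub {ρ : ℝ} (hρ : 0 ≤ ρ) :
    StrictAntiOn (fun t => (1 + ρ) * (1 - ρ * t - (1 + ρ) * t ^ 2)) (Ici 0) := by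
  intro t₁ ht₁ t₂ ht₂ ht
  simp only [mem_Ici] at ht₁ ht₂
  have hsq : t₁ ^ 2 < t₂ ^ 2 := by gcongr
  nlinarith [mul_nonneg hρ (by linarith : 0 ≤ t₂ - t₁),
    mul_lt_mul_of_pos_left hsq (by linarith : 0 < 1 + ρ)]

section

variable {K νs νε : ℝ}

lemma crWeight_nonneg (hK : 0 ≤ K) (hs : 0 ≤ νs) (he : 0 ≤ νε) : 0 ≤ crWeight K νs νε := by
  unfold crWeight
  positivity

lemma crWeight_strictAntiOn_K (hs : 0 < νs) (he : 0 ≤ νε) :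
    StrictAntiOn (crWeight · νs νε) (Ici 0) := by
  intro K₁ hK₁ K₂ hK₂ hK
  simp only [mem_Ici] at hK₁ hK₂
  exact div_lt_div_of_pos_left hs (by positivity) (by gcongr)

lemma crWeight_strictMonoOn_νs (hK : 0 ≤ K) (he : 0 < νε) :
    StrictMonoOn (crWeight K · νε) (Ici 0) := by
  intro a ha b hb hab
  simp only [mem_Ici] at ha hb
  simp only [crWeight]
  rw [div_lt_div_iff₀ (by positivity) (by positivity)]
  nlinarith

lemma crWeight_strictAntiOn_νε (hK : 0 ≤ K) (hs : 0 < νs) :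
    StrictAntiOn (crWeight K νs) (Ici 0) := by
  intro e₁ he₁ e₂ he₂ he
  simp only [mem_Ici] at he₁ he₂
  exact div_lt_div_of_pos_left hs (by positivity) (by gcongr)

lemma crCoeff_eq_of_crWeight (h : νε + (K + 1) * νs ≠ 0) :
    crCoeff K νs νε = K * (1 + crWeight K νs νε) * (1 - K * crWeight K νs νε) := by
  unfold crCoeff crWeight
  generalize hD : νε + (K + 1) * νs = D at h ⊢
  obtain rfl : νε = D - (K + 1) * νs := by linarith
  field_simp
  ring

lemma crCoeff_eq_of_crWeight_of_ratio (hs : νs ≠ 0) (h : νε + (K + 1) * νs ≠ 0) :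
    crCoeff K νs νε = (1 + νε / νs) *
      (1 - νε / νs * crWeight K νs νε - (1 + νε / νs) * crWeight K νs νε ^ 2) := by
  unfold crCoeff crWeight
  generalize hD : νε + (K + 1) * νs = D at h ⊢
  obtain rfl : νε = D - (K + 1) * νs := by linarith
  field_simp
  ring

theorem crCoeff_strictMonoOn_K (hs : 0 < νs) (he : 0 ≤ νε) :
    StrictMonoOn (crCoeff · νs νε) (Ici 0) := by
  refine ((strictAntiOn_one_add_mul_one_sub_sub (by positivity : 0 ≤ νε / νs)).comp
    (crWeight_strictAntiOn_K hs he) fun K hK => crWeight_nonneg hK hs.le he).congr ?_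
  intro K (hK : 0 ≤ K)
  exact (crCoeff_eq_of_crWeight_of_ratio hs.ne' (by positivity)).symm

theorem crCoeff_strictAntiOn_νs (hK : 1 ≤ K) (he : 0 < νε) :
    StrictAntiOn (crCoeff K · νε) (Ici 0) := by
  have hK₀ : 0 ≤ K := by linarith
  refine ((strictAntiOn_mul_one_add_mul_one_sub_mul hK).comp_strictMonoOn
    (crWeight_strictMonoOn_νs hK₀ he) fun νs hs => crWeight_nonneg hK₀ hs he.le).congr ?_
  intro νs (hs : 0 ≤ νs)
  exact (crCoeff_eq_of_crWeight (by positivity)).symm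

theorem crCoeff_strictMonoOn_νε (hK : 1 ≤ K) (hs : 0 < νs) :
    StrictMonoOn (crCoeff K νs) (Ici 0) := by
  have hK₀ : 0 ≤ K := by linarith
  refine ((strictAntiOn_mul_one_add_mul_one_sub_mul hK).comp
    (crWeight_strictAntiOn_νε hK₀ hs) fun νε he => crWeight_nonneg hK₀ hs.le he).congr ?_
  intro νε (he : 0 ≤ νε)
  exact (crCoeff_eq_of_crWeight (by positivity)).symm

end

/-- The coefficient on the publicly disclosed average personal value `r̄_K`,
`C_r(K,νs,νε) = K(νs+νε)(νε+(K+2)νs)/(νε+(K+1)νs)²`, is strictly increasing in `K`,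
strictly decreasing in `νs`, and strictly increasing in `νε`. -/
theorem Cr_coefficient_monotone
    (Cr : ℕ → ℝ → ℝ → ℝ)
    (hCr : ∀ (K : ℕ) (νs νε : ℝ),
      Cr K νs νε = (K : ℝ) * (νs + νε) * (νε + ((K : ℝ) + 2) * νs)
        / (νε + ((K : ℝ) + 1) * νs) ^ 2) :
    (∀ (K : ℕ) (νs νε : ℝ), 1 ≤ K → 0 < νs → 0 < νε →
        Cr K νs νε < Cr (K + 1) νs νε)
      ∧ (∀ (K : ℕ) (νs νs' νε : ℝ), 1 ≤ K → 0 < νs → νs < νs' → 0 < νε →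
        Cr K νs' νε < Cr K νs νε)
      ∧ (∀ (K : ℕ) (νs νε νε' : ℝ), 1 ≤ K → 0 < νs → 0 < νε → νε < νε' →
        Cr K νs νε < Cr K νs νε') := by
  have hCr' : ∀ (K : ℕ) (νs νε : ℝ), Cr K νs νε = crCoeff K νs νε := hCr
  refine ⟨fun K νs νε _ hs he => ?_, fun K νs νs' νε hK hs hss' he => ?_,
    fun K νs νε νε' hK hs he hee' => ?_⟩
  · rw [hCr', hCr', Nat.cast_succ]
    exact crCoeff_strictMonoOn_K hs he.le (mem_Ici.2 K.cast_nonneg)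
      (mem_Ici.2 (by positivity)) (lt_add_one _)
  · rw [hCr', hCr']
    exact crCoeff_strictAntiOn_νs (Nat.one_le_cast.2 hK) he hs.le (hs.trans hss').le hss'
  · rw [hCr', hCr']
    exact crCoeff_strictMonoOn_νε (Nat.one_le_cast.2 hK) hs he.le (he.trans hee').le hee'
end
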